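/- arXiv:2102.12094 — 5 statements merged into one kernel-verified Lean document; each statement's English description precedes it below -/
import Mathlib

section
/- Let 𝓜 be a finite collection of nonempty finite subsets of a finite set of base arms, and let w, l, u be real-valued weight vectors on the base arms with l(e) ≤ w(e) ≤ u(e) for every base arm e. Suppose M ∈ 𝓜 satisfies MinW(M, l) ≥ MinW(M', u) for every M' ∈ 𝓜 that is not a superset of M. Then MinW(M, w) ≥ MinW(M', w) for every M' ∈ 𝓜; consequently, if MinW(·, w) has a unique maximizer M* over 𝓜, then M = M*. -/
/-- The bottleneck value of a super arm `M` under weights `v`: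
`MinW (M, v) = min_{e ∈ M} v e` (defaulting to `0` on the empty set). -/
noncomputable def MinW {α : Type*} (M : Finset α) (v : α → ℝ) : ℝ :=
  if h : M.Nonempty then M.inf' h v else 0

lemma MinW_mono {α : Type*} (M : Finset α) {v v' : α → ℝ} (h : ∀ e ∈ M, v e ≤ v' e) :
    MinW M v ≤ MinW M v' := by
  unfold MinW
  split_ifs with hne
  · exact Finset.inf'_mono_fun h
  · rfl

lemma MinW_anti_of_subset {α : Type*} {M M' : Finset α} (hM : M.Nonempty) (h : M ⊆ M')
    (v : α → ℝ) : MinW M' v ≤ MinW M v := by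
  unfold MinW
  rw [dif_pos hM, dif_pos (hM.mono h)]
  exact Finset.inf'_mono v h hM

theorem stmt_3_general {α : Type*}
    (𝓜 : Finset (Finset α)) (h𝓜 : ∀ M ∈ 𝓜, M.Nonempty)
    (w l u : α → ℝ) (hl : ∀ e, l e ≤ w e) (hu : ∀ e, w e ≤ u e)
    (M : Finset α) (hM : M ∈ 𝓜)
    (hstop : ∀ M' ∈ 𝓜, ¬ M ⊆ M' → MinW M' u ≤ MinW M l) :
    (∀ M' ∈ 𝓜, MinW M' w ≤ MinW M w) ∧
      (∀ Mstar ∈ 𝓜,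
        (∀ M'' ∈ 𝓜, M'' ≠ Mstar → MinW M'' w < MinW Mstar w) → M = Mstar) := by
  have hmax : ∀ M' ∈ 𝓜, MinW M' w ≤ MinW M w := by
    intro M' hM'
    by_cases hsub : M ⊆ M'
    · exact MinW_anti_of_subset (h𝓜 M hM) hsub w
    · calc MinW M' w ≤ MinW M' u := MinW_mono M' fun e _ => hu e
        _ ≤ MinW M l := hstop M' hM' hsub
        _ ≤ MinW M w := MinW_mono M fun e _ => hl e
  refine ⟨hmax, fun Mstar hMstar huniq => ?_⟩
  by_contra hne
  exact (huniq M hM hne).not_ge (hmax Mstar hMstar)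

theorem stmt_3 {α : Type*} [Fintype α]
    (𝓜 : Finset (Finset α)) (h𝓜 : ∀ M ∈ 𝓜, M.Nonempty)
    (w l u : α → ℝ) (hl : ∀ e, l e ≤ w e) (hu : ∀ e, w e ≤ u e)
    (M : Finset α) (hM : M ∈ 𝓜)
    (hstop : ∀ M' ∈ 𝓜, ¬ M ⊆ M' → MinW M' u ≤ MinW M l) :
    (∀ M' ∈ 𝓜, MinW M' w ≤ MinW M w) ∧
      (∀ Mstar ∈ 𝓜,
        (∀ M'' ∈ 𝓜, M'' ≠ Mstar → MinW M'' w < MinW Mstar w) → M = Mstar) :=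
  stmt_3_general 𝓜 h𝓜 w l u hl hu M hM hstop
end

section
/- Let 𝓜 be a finite collection of nonempty finite subsets of base arms, w, l, u weight vectors with l(e) ≤ w(e) ≤ u(e) for every base arm e, and suppose MinW(·, w) has a unique maximizer M* over 𝓜; write OPT = MinW(M*, w). Let M_t ∈ 𝓜 and let B̂ be a set of base arms such that: (a) for every M ∈ 𝓜 that is not a superset of M_t there exists e ∈ B̂ ∩ M with l(e) = MinW(M, l); (b) for every e ∈ B̂ there exists M ∈ 𝓜 not a superset of M_t with e ∈ M and l(e) = MinW(M, l); and (c) u(e) ≤ (MinW(M_t, l) + l(e))/2 for every e ∈ B̂. Assume some member of 𝓜 is not a superset of M_t. Then: (i) M_t = M*; (ii) for every M ∈ 𝓜 that is not a superset of M* there exists e ∈ B̂ ∩ M with w(e) ≤ (OPT + MinW(M, w))/2; and (iii) for every e ∈ B̂ there exists M ∈ 𝓜 not a superset of M* with e ∈ M and w(e) ≤ (OPT + MinW(M, w))/2. -/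
section MinW

variable {α : Type*} {M N : Finset α} {v v' : α → ℝ}

lemma MinW_le_of_mem {e : α} (he : e ∈ M) (v : α → ℝ) : MinW M v ≤ v e := by
  rw [MinW, dif_pos ⟨e, he⟩]
  exact Finset.inf'_le v he

lemma MinW_mono_s5 (hv : v ≤ v') : MinW M v ≤ MinW M v' := by
  by_cases hM : M.Nonempty
  · simp only [MinW, dif_pos hM]
    exact Finset.inf'_mono_fun fun e _ => hv e
  · simp only [MinW, dif_neg hM, le_refl]

lemma MinW_anti (hM : M.Nonempty) (hMN : M ⊆ N) (v : α → ℝ) : MinW N v ≤ MinW M v := by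
  simp only [MinW, dif_pos hM, dif_pos (hM.mono hMN)]
  exact Finset.inf'_mono v hMN hM

lemma le_MinW_add_MinW_div_two {l w u : α → ℝ} (hl : l ≤ w) (hu : w ≤ u) {e : α}
    (hc : u e ≤ (MinW M l + l e) / 2) (he : l e = MinW N l) :
    w e ≤ (MinW M w + MinW N w) / 2 := by
  have hM : MinW M l ≤ MinW M w := MinW_mono_s5 hl
  have hN : l e ≤ MinW N w := he ▸ MinW_mono_s5 hl
  linarith [hu e]

end MinW

theorem stmt_5_general {α : Type*} [DecidableEq α]
    (𝓜 : Finset (Finset α))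
    (w l u : α → ℝ) (hl : ∀ e, l e ≤ w e) (hu : ∀ e, w e ≤ u e)
    (Mstar : Finset α) (hstar : Mstar ∈ 𝓜)
    (hunique : ∀ M ∈ 𝓜, M ≠ Mstar → MinW M w < MinW Mstar w)
    (Mt : Finset α) (hMt : Mt ∈ 𝓜)
    (Bhat : Finset α)
    (ha : ∀ M ∈ 𝓜, ¬ Mt ⊆ M → ∃ e ∈ Bhat ∩ M, l e = MinW M l)
    (hb : ∀ e ∈ Bhat, ∃ M ∈ 𝓜, ¬ Mt ⊆ M ∧ e ∈ M ∧ l e = MinW M l)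
    (hc : ∀ e ∈ Bhat, u e ≤ (MinW Mt l + l e) / 2)
    (hex : ∃ M ∈ 𝓜, ¬ Mt ⊆ M) :
    Mt = Mstar ∧
      (∀ M ∈ 𝓜, ¬ Mstar ⊆ M →
        ∃ e ∈ Bhat ∩ M, w e ≤ (MinW Mstar w + MinW M w) / 2) ∧
      (∀ e ∈ Bhat, ∃ M ∈ 𝓜, ¬ Mstar ⊆ M ∧ e ∈ M ∧
        w e ≤ (MinW Mstar w + MinW M w) / 2) := by
  have hMt_nonempty : Mt.Nonempty := by
    obtain ⟨M, -, hsub⟩ := hex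
    exact Finset.nonempty_iff_ne_empty.2 fun h => hsub (h ▸ Finset.empty_subset M)
  have key {M : Finset α} {e : α} (he : e ∈ Bhat) (hle : l e = MinW M l) :
      w e ≤ (MinW Mt w + MinW M w) / 2 :=
    le_MinW_add_MinW_div_two hl hu (hc e he) hle
  obtain rfl : Mt = Mstar := by
    by_contra hne
    have hlt : MinW Mt w < MinW Mstar w := hunique Mt hMt hne
    by_cases hsub : Mt ⊆ Mstar
    · exact (MinW_anti hMt_nonempty hsub w).not_gt hlt
    · obtain ⟨e, he, hle⟩ := ha Mstar hstar hsub
      rw [Finset.mem_inter] at he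
      linarith [MinW_le_of_mem he.2 w, key he.1 hle]
  refine ⟨rfl, fun M hM hsub => ?_, fun e he => ?_⟩
  · obtain ⟨e, he, hle⟩ := ha M hM hsub
    exact ⟨e, he, key (Finset.mem_inter.1 he).1 hle⟩
  · obtain ⟨M, hM, hsub, heM, hle⟩ := hb e he
    exact ⟨M, hM, hsub, heM, key he hle⟩

theorem stmt_5 {α : Type*} [Fintype α] [DecidableEq α]
    (𝓜 : Finset (Finset α)) (h𝓜 : ∀ M ∈ 𝓜, M.Nonempty)
    (w l u : α → ℝ) (hl : ∀ e, l e ≤ w e) (hu : ∀ e, w e ≤ u e)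
    (Mstar : Finset α) (hstar : Mstar ∈ 𝓜)
    (hunique : ∀ M ∈ 𝓜, M ≠ Mstar → MinW M w < MinW Mstar w)
    (Mt : Finset α) (hMt : Mt ∈ 𝓜)
    (Bhat : Finset α)
    (ha : ∀ M ∈ 𝓜, ¬ Mt ⊆ M → ∃ e ∈ Bhat ∩ M, l e = MinW M l)
    (hb : ∀ e ∈ Bhat, ∃ M ∈ 𝓜, ¬ Mt ⊆ M ∧ e ∈ M ∧ l e = MinW M l)
    (hc : ∀ e ∈ Bhat, u e ≤ (MinW Mt l + l e) / 2)
    (hex : ∃ M ∈ 𝓜, ¬ Mt ⊆ M) :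
    Mt = Mstar ∧
      (∀ M ∈ 𝓜, ¬ Mstar ⊆ M →
        ∃ e ∈ Bhat ∩ M, w e ≤ (MinW Mstar w + MinW M w) / 2) ∧
      (∀ e ∈ Bhat, ∃ M ∈ 𝓜, ¬ Mstar ⊆ M ∧ e ∈ M ∧
        w e ≤ (MinW Mstar w + MinW M w) / 2) :=
  stmt_5_general 𝓜 w l u hl hu Mstar hstar hunique Mt hMt Bhat ha hb hc hex
end

section
/- Under the stated setup, every base arm e ∉ A ∪ R with Δ^B_e ≥ Δ satisfies: e ∈ M* if and only if e ∈ M_t. -/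
section MinW

variable {α : Type*} {M : Finset α} {v w : α → ℝ} {c ε : ℝ} {i : α}

theorem MinW_le (hi : i ∈ M) : MinW M v ≤ v i := by
  rw [MinW, dif_pos ⟨i, hi⟩]
  exact M.inf'_le v hi

theorem le_MinW (hM : M.Nonempty) (h : ∀ i ∈ M, c ≤ v i) : c ≤ MinW M v := by
  rw [MinW, dif_pos hM]
  exact M.le_inf' hM v h

theorem exists_mem_MinW_eq (hM : M.Nonempty) : ∃ i ∈ M, MinW M v = v i := by
  rw [MinW, dif_pos hM]
  exact M.exists_mem_eq_inf' hM v

theorem MinW_sub_le_MinW (hM : M.Nonempty) (h : ∀ i ∈ M, w i - ε ≤ v i) :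
    MinW M w - ε ≤ MinW M v :=
  le_MinW hM fun i hi => (sub_le_sub_right (MinW_le hi) ε).trans (h i hi)

end MinW

section Estimate

variable {α : Type*} [DecidableEq α] {A R Mstar Mt : Finset α} {w what : α → ℝ} {ε : ℝ}

theorem sub_le_of_notMem_of_estimate (hε : 0 ≤ ε)
    (hacc : ∀ i, i ∉ A ∪ R → |what i - w i| < ε) (hopt : ∀ i ∈ A, w i ≤ what i)
    {i : α} (hiR : i ∉ R) : w i - ε ≤ what i := by
  by_cases hiA : i ∈ A
  · linarith [hopt i hiA]
  · linarith [(abs_lt.1 (hacc i (by simp [hiA, hiR]))).1]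

theorem MinW_sub_le_MinW_of_estimate (hε : 0 ≤ ε) (hMstar : Mstar.Nonempty)
    (hR : R ∩ Mstar = ∅)
    (hacc : ∀ i, i ∉ A ∪ R → |what i - w i| < ε) (hopt : ∀ i ∈ A, w i ≤ what i) :
    MinW Mstar w - ε ≤ MinW Mstar what :=
  MinW_sub_le_MinW hMstar fun _ hi =>
    sub_le_of_notMem_of_estimate hε hacc hopt fun hiR =>
      Finset.eq_empty_iff_forall_notMem.1 hR _ (Finset.mem_inter.2 ⟨hiR, hi⟩)

theorem MinW_lt_MinW_add_of_estimate (hε : 0 < ε) (hMt : Mt.Nonempty) (hA : A ⊆ Mstar)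
    (hMtR : Mt ∩ R = ∅) (hacc : ∀ i, i ∉ A ∪ R → |what i - w i| < ε)
    (hlow : MinW Mstar w - ε ≤ MinW Mt what) :
    MinW Mstar w < MinW Mt w + 2 * ε := by
  obtain ⟨i, hiMt, hmin⟩ := exists_mem_MinW_eq (v := w) hMt
  by_cases hiA : i ∈ A
  · linarith [MinW_le (v := w) (hA hiA)]
  · have hiR : i ∉ R := fun hiR =>
      Finset.eq_empty_iff_forall_notMem.1 hMtR i (Finset.mem_inter.2 ⟨hiMt, hiR⟩)
    linarith [(abs_lt.1 (hacc i (by simp [hiA, hiR]))).2, MinW_le (v := what) hiMt]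

end Estimate

theorem stmt_7_general {α : Type*} [DecidableEq α]
    (𝓜 : Finset (Finset α)) (h𝓜 : ∀ M ∈ 𝓜, M.Nonempty)
    (w : α → ℝ) (Mstar : Finset α) (hstar : Mstar ∈ 𝓜)
    (A R : Finset α) (hA : A ⊆ Mstar) (hR : R ∩ Mstar = ∅)
    (Δ : ℝ) (hΔ : 0 < Δ) (what : α → ℝ)
    (hw1 : ∀ i, i ∉ A ∪ R → |what i - w i| < Δ / 8)
    (hw2 : ∀ i ∈ A, w i ≤ what i)
    (Mt : Finset α) (hMt1 : Mt ∈ 𝓜) (hMt2 : Mt ∩ R = ∅)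
    (hMtmax : ∀ M ∈ 𝓜, M ∩ R = ∅ → MinW M what ≤ MinW Mt what)
    (e : α)
    -- `Δ^B_e ≥ Δ` (together with nonemptiness of the collection defining `Δ^B_e`)
    (hgap1 : e ∈ Mstar →
      (∃ M ∈ 𝓜, e ∉ M) ∧ ∀ M ∈ 𝓜, e ∉ M → MinW M w + Δ ≤ MinW Mstar w)
    (hgap2 : e ∉ Mstar →
      (∃ M ∈ 𝓜, e ∈ M) ∧ ∀ M ∈ 𝓜, e ∈ M → MinW M w + Δ ≤ MinW Mstar w) :
    e ∈ Mstar ↔ e ∈ Mt := by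
  have hε : 0 < Δ / 8 := by positivity
  have hlow : MinW Mstar w - Δ / 8 ≤ MinW Mt what :=
    (MinW_sub_le_MinW_of_estimate hε.le (h𝓜 Mstar hstar) hR hw1 hw2).trans
      (hMtmax Mstar hstar (by rwa [Finset.inter_comm]))
  have hnear : MinW Mstar w < MinW Mt w + Δ := by
    linarith [MinW_lt_MinW_add_of_estimate hε (h𝓜 Mt hMt1) hA hMt2 hw1 hlow]
  constructor
  · intro heMstar
    by_contra heMt
    linarith [(hgap1 heMstar).2 Mt hMt1 heMt]
  · intro heMt
    by_contra heMstar
    linarith [(hgap2 heMstar).2 Mt hMt1 heMt]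

theorem stmt_7 {α : Type*} [Fintype α] [DecidableEq α]
    (𝓜 : Finset (Finset α)) (h𝓜 : ∀ M ∈ 𝓜, M.Nonempty)
    (w : α → ℝ) (Mstar : Finset α) (hstar : Mstar ∈ 𝓜)
    (hunique : ∀ M ∈ 𝓜, M ≠ Mstar → MinW M w < MinW Mstar w)
    (A R : Finset α) (hA : A ⊆ Mstar) (hR : R ∩ Mstar = ∅)
    (Δ : ℝ) (hΔ : 0 < Δ) (what : α → ℝ)
    (hw1 : ∀ i, i ∉ A ∪ R → |what i - w i| < Δ / 8)
    (hw2 : ∀ i ∈ A, w i ≤ what i)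
    (Mt : Finset α) (hMt1 : Mt ∈ 𝓜) (hMt2 : Mt ∩ R = ∅)
    (hMtmax : ∀ M ∈ 𝓜, M ∩ R = ∅ → MinW M what ≤ MinW Mt what)
    (e : α) (he : e ∉ A ∪ R)
    -- `Δ^B_e ≥ Δ` (together with nonemptiness of the collection defining `Δ^B_e`)
    (hgap1 : e ∈ Mstar →
      (∃ M ∈ 𝓜, e ∉ M) ∧ ∀ M ∈ 𝓜, e ∉ M → MinW M w + Δ ≤ MinW Mstar w)
    (hgap2 : e ∉ Mstar →
      (∃ M ∈ 𝓜, e ∈ M) ∧ ∀ M ∈ 𝓜, e ∈ M → MinW M w + Δ ≤ MinW Mstar w) :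
    e ∈ Mstar ↔ e ∈ Mt :=
  stmt_7_general 𝓜 h𝓜 w Mstar hstar A R hA hR Δ hΔ what hw1 hw2 Mt hMt1 hMt2 hMtmax e hgap1 hgap2
end

section
/- Under the stated setup, let U = [n] \ (A ∪ R); for each i ∈ U let M̃_i be a maximizer of MinW(·, ŵ) over {M ∈ 𝓜_R : i ∉ M} if i ∈ M_t and over {M ∈ 𝓜_R : i ∈ M} if i ∉ M_t (with the bottleneck value over an empty collection taken to be −∞), and define g(i) = MinW(M_t, ŵ) − MinW(M̃_i, ŵ) (so g(i) = +∞ when the respective collection is empty). If some e ∈ U satisfies Δ^B_e ≥ Δ, then every maximizer p of g over U satisfies: p ∈ M* if and only if p ∈ M_t. -/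
section MinW

variable {α : Type*} {M : Finset α}

lemma MinW_le_apply (v : α → ℝ) {i : α} (hi : i ∈ M) : MinW M v ≤ v i := by
  rw [MinW, dif_pos ⟨i, hi⟩]
  exact Finset.inf'_le v hi

lemma exists_mem_apply_eq_MinW (v : α → ℝ) (hM : M.Nonempty) : ∃ j ∈ M, v j = MinW M v := by
  obtain ⟨j, hj, hjv⟩ := Finset.exists_mem_eq_inf' hM v
  exact ⟨j, hj, by rw [MinW, dif_pos hM, hjv]⟩

lemma MinW_le_MinW_add {u v : α → ℝ} {ε : ℝ} (hε : 0 ≤ ε)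
    (h : ∀ j ∈ M, v j = MinW M v → u j ≤ v j + ε) : MinW M u ≤ MinW M v + ε := by
  rcases M.eq_empty_or_nonempty with rfl | hM
  · simpa [MinW] using hε
  · obtain ⟨j, hj, hjv⟩ := exists_mem_apply_eq_MinW v hM
    calc MinW M u ≤ u j := MinW_le_apply u hj
      _ ≤ v j + ε := h j hj hjv
      _ = MinW M v + ε := by rw [hjv]

end MinW

section Estimate

variable {α : Type*} [DecidableEq α] {w what : α → ℝ} {M Mstar A R : Finset α} {ε : ℝ}

lemma notMem_of_inter_eq_empty (hMR : M ∩ R = ∅) {j : α} (hj : j ∈ M) : j ∉ R :=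
  Finset.disjoint_left.mp (Finset.disjoint_iff_inter_eq_empty.mpr hMR) hj

lemma MinW_le_MinW_estimate_add (hε : 0 ≤ ε) (hA : ∀ i ∈ A, w i ≤ what i)
    (hclose : ∀ i, i ∉ A ∪ R → |what i - w i| ≤ ε) (hMR : M ∩ R = ∅) :
    MinW M w ≤ MinW M what + ε := by
  refine MinW_le_MinW_add hε fun j hj _ => ?_
  by_cases hjA : j ∈ A
  · linarith [hA j hjA]
  · have hjAR : j ∉ A ∪ R := by simp [hjA, notMem_of_inter_eq_empty hMR hj]
    linarith [(abs_le.mp (hclose j hjAR)).1]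

lemma MinW_estimate_le_MinW_add (hε : 0 ≤ ε) (hAstar : A ⊆ Mstar)
    (hclose : ∀ i, i ∉ A ∪ R → |what i - w i| ≤ ε) (hMR : M ∩ R = ∅)
    (hlt : MinW M w < MinW Mstar w) : MinW M what ≤ MinW M w + ε := by
  refine MinW_le_MinW_add hε fun j hj hjmin => ?_
  have hjA : j ∉ A := fun hjA => (MinW_le_apply w (hAstar hjA)).not_gt (hjmin ▸ hlt)
  have hjAR : j ∉ A ∪ R := by simp [hjA, notMem_of_inter_eq_empty hMR hj]
  linarith [(abs_le.mp (hclose j hjAR)).2]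

end Estimate

section Gap

variable {α : Type*} [DecidableEq α] {𝓜 : Finset (Finset α)} {w what : α → ℝ}
  {Mstar Mt R : Finset α} {ε Δ : ℝ} {e : α}

lemma mem_iff_mem_of_gap (hMt : Mt ∈ 𝓜) (hMtR : Mt ∩ R = ∅)
    (hopt : MinW Mstar w ≤ MinW Mt what + ε)
    (hsub : ∀ M ∈ 𝓜, M ∩ R = ∅ → M ≠ Mstar → MinW M what ≤ MinW M w + ε)
    (hΔ : 2 * ε < Δ) (hgap : ∀ M ∈ 𝓜, ¬(e ∈ M ↔ e ∈ Mstar) → MinW M w + Δ ≤ MinW Mstar w) :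
    e ∈ Mstar ↔ e ∈ Mt := by
  by_contra hne
  have hMt_gap := hgap Mt hMt fun h => hne h.symm
  have hMt_est := hsub Mt hMt hMtR (by rintro rfl; exact hne Iff.rfl)
  linarith

lemma MinW_estimate_add_le_of_gap (hMt : Mt ∈ 𝓜) (hMtR : Mt ∩ R = ∅)
    (hopt : MinW Mstar w ≤ MinW Mt what + ε)
    (hsub : ∀ M ∈ 𝓜, M ∩ R = ∅ → M ≠ Mstar → MinW M what ≤ MinW M w + ε)
    (hΔ : 2 * ε < Δ) (hgap : ∀ M ∈ 𝓜, ¬(e ∈ M ↔ e ∈ Mstar) → MinW M w + Δ ≤ MinW Mstar w)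
    {M : Finset α} (hM : M ∈ 𝓜) (hMR : M ∩ R = ∅) (hMe : ¬(e ∈ M ↔ e ∈ Mt)) :
    MinW M what + (Δ - 2 * ε) ≤ MinW Mt what := by
  rw [← mem_iff_mem_of_gap hMt hMtR hopt hsub hΔ hgap] at hMe
  have hM_gap := hgap M hM hMe
  have hM_est := hsub M hM hMR (by rintro rfl; exact hMe Iff.rfl)
  linarith

end Gap

lemma ite_not_iff_not_iff {p q : Prop} [Decidable p] :
    (if p then ¬q else q) ↔ ¬(q ↔ p) := by
  by_cases hp : p <;> simp [hp]

lemma coe_le_coe_sub_sup {ι : Type*} {S : Finset ι} {f : ι → ℝ} {a c : ℝ}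
    (h : ∀ i ∈ S, f i + c ≤ a) : (c : EReal) ≤ a - S.sup fun i => (f i : EReal) :=
  calc (c : EReal) = a - ((a - c : ℝ) : EReal) := by rw [← EReal.coe_sub, sub_sub_cancel]
    _ ≤ a - S.sup fun i => (f i : EReal) :=
      EReal.sub_le_sub le_rfl <| Finset.sup_le fun i hi => EReal.coe_le_coe_iff.mpr <| by
        linarith [h i hi]

lemma coe_sub_sup_le_coe {ι : Type*} {S : Finset ι} {f : ι → ℝ} {a c : ℝ} {i : ι}
    (hi : i ∈ S) (h : a ≤ f i + c) : (a : EReal) - (S.sup fun i => (f i : EReal)) ≤ c :=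
  calc (a : EReal) - (S.sup fun i => (f i : EReal)) ≤ a - f i :=
        EReal.sub_le_sub le_rfl (Finset.le_sup (f := fun i => (f i : EReal)) hi)
    _ ≤ c := by rw [← EReal.coe_sub]; exact EReal.coe_le_coe_iff.mpr (by linarith)

open scoped Classical in
theorem stmt_10_general {α : Type*} [DecidableEq α]
    (𝓜 : Finset (Finset α))
    (w : α → ℝ) (Mstar : Finset α) (hstar : Mstar ∈ 𝓜)
    (hunique : ∀ M ∈ 𝓜, M ≠ Mstar → MinW M w < MinW Mstar w)
    (A R : Finset α) (hA : A ⊆ Mstar) (hR : R ∩ Mstar = ∅)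
    (Δ : ℝ) (hΔ : 0 < Δ) (what : α → ℝ)
    (hw1 : ∀ i, i ∉ A ∪ R → |what i - w i| < Δ / 8)
    (hw2 : ∀ i ∈ A, w i ≤ what i)
    (Mt : Finset α) (hMt1 : Mt ∈ 𝓜) (hMt2 : Mt ∩ R = ∅)
    (hMtmax : ∀ M ∈ 𝓜, M ∩ R = ∅ → MinW M what ≤ MinW Mt what)
    (U : Finset α)
    -- the empirical gap `g i = MinW (M_t, ŵ) - MinW (M̃_i, ŵ)`, in the extended reals,
    -- where the bottleneck value over an empty collection is `⊥ = -∞`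
    (g : α → EReal)
    (hg : ∀ i, g i = (MinW Mt what : EReal) -
      ((𝓜.filter (fun M => M ∩ R = ∅ ∧ (if i ∈ Mt then i ∉ M else i ∈ M))).sup
        (fun M => ((MinW M what : ℝ) : EReal))))
    -- some undetermined base arm `e` has `Δ^B_e ≥ Δ`
    (hex : ∃ e ∈ U,
      (e ∈ Mstar →
        (∃ M ∈ 𝓜, e ∉ M) ∧ ∀ M ∈ 𝓜, e ∉ M → MinW M w + Δ ≤ MinW Mstar w) ∧
      (e ∉ Mstar →
        (∃ M ∈ 𝓜, e ∈ M) ∧ ∀ M ∈ 𝓜, e ∈ M → MinW M w + Δ ≤ MinW Mstar w))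
    (p : α) (hpmax : ∀ i ∈ U, g i ≤ g p) :
    p ∈ Mstar ↔ p ∈ Mt := by
  obtain ⟨e, heU, he_in, he_out⟩ := hex
  have hε : 0 ≤ Δ / 8 := by positivity
  have hclose i (hi : i ∉ A ∪ R) : |what i - w i| ≤ Δ / 8 := (hw1 i hi).le
  have hRstar : Mstar ∩ R = ∅ := by rwa [Finset.inter_comm]
  have hstar_lower : MinW Mstar w ≤ MinW Mstar what + Δ / 8 :=
    MinW_le_MinW_estimate_add hε hw2 hclose hRstar
  have hopt : MinW Mstar w ≤ MinW Mt what + Δ / 8 := by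
    linarith [hMtmax Mstar hstar hRstar]
  have hsub (M) (hM : M ∈ 𝓜) (hMR : M ∩ R = ∅) (hne : M ≠ Mstar) :
      MinW M what ≤ MinW M w + Δ / 8 :=
    MinW_estimate_le_MinW_add hε hA hclose hMR (hunique M hM hne)
  have hgap (M) (hM : M ∈ 𝓜) (hMe : ¬(e ∈ M ↔ e ∈ Mstar)) : MinW M w + Δ ≤ MinW Mstar w := by
    by_cases heS : e ∈ Mstar
    · exact (he_in heS).2 M hM (by tauto)
    · exact (he_out heS).2 M hM (by tauto)
  have hge : ((Δ - 2 * (Δ / 8) : ℝ) : EReal) ≤ g e := by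
    rw [hg]
    refine coe_le_coe_sub_sup fun M hM => ?_
    obtain ⟨hM, hMR, hMe⟩ := Finset.mem_filter.mp hM
    exact MinW_estimate_add_le_of_gap hMt1 hMt2 hopt hsub (by linarith) hgap hM hMR
      (ite_not_iff_not_iff.mp hMe)
  by_contra hp
  have hMt_ne : Mt ≠ Mstar := by rintro rfl; exact hp Iff.rfl
  have hgp : g p ≤ ((2 * (Δ / 8) : ℝ) : EReal) := by
    rw [hg]
    refine coe_sub_sup_le_coe
      (Finset.mem_filter.mpr ⟨hstar, hRstar, ite_not_iff_not_iff.mpr hp⟩) ?_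
    linarith [hsub Mt hMt1 hMt2 hMt_ne, hunique Mt hMt1 hMt_ne]
  have := EReal.coe_le_coe_iff.mp (hge.trans ((hpmax e heU).trans hgp))
  linarith

open scoped Classical in
theorem stmt_10 {α : Type*} [Fintype α] [DecidableEq α]
    (𝓜 : Finset (Finset α)) (h𝓜 : ∀ M ∈ 𝓜, M.Nonempty)
    (w : α → ℝ) (Mstar : Finset α) (hstar : Mstar ∈ 𝓜)
    (hunique : ∀ M ∈ 𝓜, M ≠ Mstar → MinW M w < MinW Mstar w)
    (A R : Finset α) (hA : A ⊆ Mstar) (hR : R ∩ Mstar = ∅)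
    (Δ : ℝ) (hΔ : 0 < Δ) (what : α → ℝ)
    (hw1 : ∀ i, i ∉ A ∪ R → |what i - w i| < Δ / 8)
    (hw2 : ∀ i ∈ A, w i ≤ what i)
    (Mt : Finset α) (hMt1 : Mt ∈ 𝓜) (hMt2 : Mt ∩ R = ∅)
    (hMtmax : ∀ M ∈ 𝓜, M ∩ R = ∅ → MinW M what ≤ MinW Mt what)
    (U : Finset α) (hU : U = Finset.univ \ (A ∪ R))
    -- the empirical gap `g i = MinW (M_t, ŵ) - MinW (M̃_i, ŵ)`, in the extended reals,
    -- where the bottleneck value over an empty collection is `⊥ = -∞`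
    (g : α → EReal)
    (hg : ∀ i, g i = (MinW Mt what : EReal) -
      ((𝓜.filter (fun M => M ∩ R = ∅ ∧ (if i ∈ Mt then i ∉ M else i ∈ M))).sup
        (fun M => ((MinW M what : ℝ) : EReal))))
    -- some undetermined base arm `e` has `Δ^B_e ≥ Δ`
    (hex : ∃ e ∈ U,
      (e ∈ Mstar →
        (∃ M ∈ 𝓜, e ∉ M) ∧ ∀ M ∈ 𝓜, e ∉ M → MinW M w + Δ ≤ MinW Mstar w) ∧
      (e ∉ Mstar →
        (∃ M ∈ 𝓜, e ∈ M) ∧ ∀ M ∈ 𝓜, e ∈ M → MinW M w + Δ ≤ MinW Mstar w))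
    (p : α) (hp : p ∈ U) (hpmax : ∀ i ∈ U, g i ≤ g p) :
    p ∈ Mstar ↔ p ∈ Mt :=
  stmt_10_general 𝓜 w Mstar hstar hunique A R hA hR Δ hΔ what hw1 hw2 Mt hMt1 hMt2 hMtmax U g hg hex
    p hpmax
end

section
/- For all natural numbers n ≥ 1 and T ≥ n, letting H_n = Σ_{i=1}^{n} 1/i, we have Σ_{t=1}^{n} ⌈(T − n)/(H_n · (n − t + 1))⌉ ≤ T, where ⌈·⌉ denotes the ceiling of a real number. -/
/-!
Put `x_t = (T - n) / (H_n (n - t + 1))`. Reflecting `t ↦ n + 1 - t` shows `∑_t 1 / (n - t + 1) = H_n`,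
so `∑_t x_t = T - n`, and since `⌈x⌉ < x + 1` for `x ≥ 0` the sum of the ceilings is at most
`(T - n) + n = T`.
-/

open Finset

lemma Finset.natCast_sum_natCeil_le {ι : Type*} (s : Finset ι) (f : ι → ℝ)
    (hf : ∀ i ∈ s, 0 ≤ f i) : ((∑ i ∈ s, ⌈f i⌉₊ : ℕ) : ℝ) ≤ ∑ i ∈ s, f i + #s := by
  rw [Nat.cast_sum, card_eq_sum_ones, Nat.cast_sum, Nat.cast_one, ← sum_add_distrib]
  exact sum_le_sum fun i hi => (Nat.ceil_lt_add_one (hf i hi)).le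

/-- Rounding up the shares of `c` allotted in proportion to `1 / w i` overshoots `c` by at most
one per share. -/
lemma Finset.natCast_sum_natCeil_div_mul_le {ι : Type*} (s : Finset ι) (hs : s.Nonempty)
    (w : ι → ℝ) (hw : ∀ i ∈ s, 0 < w i) {c : ℝ} (hc : 0 ≤ c) :
    ((∑ i ∈ s, ⌈c / ((∑ j ∈ s, 1 / w j) * w i)⌉₊ : ℕ) : ℝ) ≤ c + #s := by
  set W := ∑ j ∈ s, 1 / w j
  have hW : 0 < W := sum_pos (fun j hj => one_div_pos.2 (hw j hj)) hs
  have hshares : ∑ i ∈ s, c / (W * w i) = c := calc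
    ∑ i ∈ s, c / (W * w i) = c / W * W := by
      rw [mul_sum]
      refine sum_congr rfl fun i hi => ?_
      field_simp [(hw i hi).ne']
    _ = c := div_mul_cancel₀ c hW.ne'
  calc ((∑ i ∈ s, ⌈c / (W * w i)⌉₊ : ℕ) : ℝ)
      ≤ ∑ i ∈ s, c / (W * w i) + #s :=
        s.natCast_sum_natCeil_le _ fun i hi => div_nonneg hc (mul_pos hW (hw i hi)).le
    _ = c + #s := by rw [hshares]

lemma Finset.sum_Icc_one_reflect {M : Type*} [AddCommMonoid M] (f : ℕ → M) (n : ℕ) :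
    ∑ t ∈ Icc 1 n, f (n + 1 - t) = ∑ t ∈ Icc 1 n, f t := by
  simp_rw [← Ico_add_one_right_eq_Icc]
  simpa using sum_Ico_reflect f 1 (m := n + 1) (n := n + 1) (by omega)

lemma sum_Icc_one_div_sub_add_one (n : ℕ) :
    ∑ t ∈ Icc 1 n, 1 / ((n : ℝ) - t + 1) = ∑ i ∈ Icc 1 n, 1 / (i : ℝ) := by
  rw [← sum_Icc_one_reflect]
  refine sum_congr rfl fun t ht => ?_
  rw [Nat.cast_sub (by have := (mem_Icc.1 ht).2; omega)]
  push_cast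
  ring_nf

theorem stmt_11 (n T : ℕ) (hn : 1 ≤ n) (hT : n ≤ T) :
    ∑ t ∈ Finset.Icc 1 n,
      ⌈((T : ℝ) - (n : ℝ)) /
        ((∑ i ∈ Finset.Icc 1 n, (1 : ℝ) / (i : ℝ)) * ((n : ℝ) - (t : ℝ) + 1))⌉₊ ≤ T := by
  have hw : ∀ t ∈ Icc 1 n, (0 : ℝ) < n - t + 1 := fun t ht => by
    have : (t : ℝ) ≤ n := by exact_mod_cast (mem_Icc.1 ht).2
    linarith
  have hc : (0 : ℝ) ≤ T - n := sub_nonneg.2 (by exact_mod_cast hT)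
  have hbound := (Icc 1 n).natCast_sum_natCeil_div_mul_le ⟨1, by simp [hn]⟩
    (fun t : ℕ => (n : ℝ) - t + 1) hw hc
  rw [sum_Icc_one_div_sub_add_one, Nat.card_Icc, Nat.add_sub_cancel] at hbound
  exact_mod_cast hbound.trans_eq (sub_add_cancel _ _)
end
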